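/- Let D(k,r) be the number of partitions of {1,...,k} into r nonempty blocks such that elements in the same block have pairwise distance at least 2 and the elements 1 and k lie in the same block. Then D(k,r) = Σ_{j=1}^{k-r} (-1)^{j+1} B^2(k-j, r), where B^2(m,r) counts the distance-at-least-2 partitions of {1,...,m} into r blocks. -/

import Mathlib

/-- `B²(m,r)`: the number of partitions of `{1,…,m}` into `r` nonempty blocks such that any
two distinct elements of the same block differ by at least 2. -/
noncomputable def stirlingB2dist (m r : ℕ) : ℕ :=
  {P : Finpartition (Finset.univ : Finset (Fin m)) |
    P.parts.card = r ∧
    ∀ b ∈ P.parts, ∀ i ∈ b, ∀ j ∈ b, i ≠ j → 2 ≤ Nat.dist i.val j.val}.ncard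

/-- `D(k,r)`: as in `stirlingB2dist k r`, but additionally requiring that the elements `1`
and `k` (here `⟨0,_⟩` and `⟨k-1,_⟩` of `Fin k`) lie in the same block. -/
noncomputable def Dcount (k r : ℕ) (hk : 0 < k) : ℕ :=
  {P : Finpartition (Finset.univ : Finset (Fin k)) |
    P.parts.card = r ∧
    (∀ b ∈ P.parts, ∀ i ∈ b, ∀ j ∈ b, i ≠ j → 2 ≤ Nat.dist i.val j.val) ∧
    ∃ b ∈ P.parts, (⟨0, hk⟩ : Fin k) ∈ b ∧ (⟨k - 1, Nat.sub_lt hk one_pos⟩ : Fin k) ∈ b}.ncard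


/-!
Deleting the element `k + 1` maps the separated partitions of `{1, …, k + 1}` in which `1` and
`k + 1` share a block bijectively onto the separated partitions of `{1, …, k}` in which `1` and `k`
do not: `k` is adjacent to `k + 1`, so it cannot lie in the block of `k + 1`, which is the block of
`1`; the inverse puts `k + 1` back into the block of `1`. Hence `B²(k, r) = D(k, r) + D(k + 1, r)`.
Since `D(r, r) = 0` for `r ≥ 2` (all blocks are singletons), unrolling this recurrence from
`k = r` gives the alternating sum.
-/
open Finset

theorem Finset.card_image_eq_card_image_of_eq_iff_eq {α X Y : Type*} [DecidableEq X] [DecidableEq Y]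
    (s : Finset α) {u : α → X} {v : α → Y} (huv : ∀ x y, u x = u y ↔ v x = v y) :
    #(s.image u) = #(s.image v) := by
  set t := s.image fun x => (u x, v x)
  have hfst : Set.InjOn Prod.fst (t : Set (X × Y)) := by
    rintro _ hp _ hq h
    obtain ⟨x, -, rfl⟩ := mem_image.1 hp
    obtain ⟨y, -, rfl⟩ := mem_image.1 hq
    exact Prod.ext h ((huv x y).1 h)
  have hsnd : Set.InjOn Prod.snd (t : Set (X × Y)) := by
    rintro _ hp _ hq h
    obtain ⟨x, -, rfl⟩ := mem_image.1 hp
    obtain ⟨y, -, rfl⟩ := mem_image.1 hq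
    exact Prod.ext ((huv x y).2 h) h
  calc #(s.image u) = #(t.image Prod.fst) := by rw [image_image]; rfl
    _ = #(t.image Prod.snd) := by rw [card_image_of_injOn hfst, card_image_of_injOn hsnd]
    _ = #(s.image v) := by rw [image_image]; rfl

instance Setoid.decidableRelKer {α X : Type*} [DecidableEq X] (f : α → X) :
    DecidableRel (Setoid.ker f) :=
  fun x y => inferInstanceAs (Decidable (f x = f y))

namespace Finpartition

variable {α β γ : Type*} [DecidableEq α]

theorem parts_eq_image_part {s : Finset α} (P : Finpartition s) : P.parts = s.image P.part := by
  ext b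
  rw [mem_image]
  refine ⟨fun hb => ?_, ?_⟩
  · obtain ⟨x, hx⟩ := P.nonempty_of_mem_parts hb
    exact ⟨x, P.subset hb hx, P.part_eq_of_mem hb hx⟩
  · rintro ⟨x, hx, rfl⟩
    exact P.part_mem.2 hx

variable [Fintype α]

theorem ext_part {P Q : Finpartition (univ : Finset α)} (h : ∀ x, P.part x = Q.part x) : P = Q :=
  Finpartition.ext <| by rw [parts_eq_image_part, parts_eq_image_part, image_congr fun x _ => h x]

variable [Fintype β] [DecidableEq β] [Fintype γ] [DecidableEq γ]

def comap (f : α → β) (P : Finpartition (univ : Finset β)) : Finpartition (univ : Finset α) :=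
  ofSetoid (Setoid.ker (P.part ∘ f))

variable {f : α → β} {P : Finpartition (univ : Finset β)} {x y : α}

theorem mem_part_comap : y ∈ (P.comap f).part x ↔ P.part (f x) = P.part (f y) :=
  mem_part_ofSetoid_iff_rel.trans Setoid.ker_def

theorem part_comap_eq_part_comap :
    (P.comap f).part x = (P.comap f).part y ↔ P.part (f x) = P.part (f y) := by
  rw [eq_comm, ← (P.comap f).mem_part_iff_part_eq_part (mem_univ y) (mem_univ x), mem_part_comap]

theorem comap_comap (g : γ → α) : (P.comap f).comap g = P.comap (f ∘ g) :=
  ext_part fun x => by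
    ext y
    simp only [mem_part_comap, part_comap_eq_part_comap, Function.comp_apply]

theorem comap_eq_self {f : β → β} (hf : ∀ x, P.part (f x) = P.part x) : P.comap f = P :=
  ext_part fun x => by
    ext y
    rw [mem_part_comap, hf, hf, P.mem_part_iff_part_eq_part (mem_univ y) (mem_univ x), eq_comm]

theorem card_parts_comap (hf : ∀ y, ∃ x, P.part (f x) = P.part y) :
    #(P.comap f).parts = #P.parts := by
  rw [parts_eq_image_part, parts_eq_image_part P,
    card_image_eq_card_image_of_eq_iff_eq univ fun _ _ => part_comap_eq_part_comap]
  congr 1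
  ext b
  simp only [mem_image, mem_univ, true_and]
  exact ⟨fun ⟨x, hx⟩ => ⟨f x, hx⟩, fun ⟨y, hy⟩ => (hf y).imp fun x hx => hx.trans hy⟩

end Finpartition

open Finpartition

section Separated

variable {m n r : ℕ}

def IsSeparated (P : Finpartition (univ : Finset (Fin m))) : Prop :=
  ∀ i j, P.part i = P.part j → i ≠ j → 2 ≤ Nat.dist i j

theorem isSeparated_iff {P : Finpartition (univ : Finset (Fin m))} :
    IsSeparated P ↔ ∀ b ∈ P.parts, ∀ i ∈ b, ∀ j ∈ b, i ≠ j → 2 ≤ Nat.dist i.val j.val := by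
  refine ⟨fun h b hb i hi j hj =>
    h i j ((P.part_eq_of_mem hb hi).trans (P.part_eq_of_mem hb hj).symm), fun h i j hij => ?_⟩
  refine h _ (P.part_mem.2 (mem_univ i)) i (P.mem_part_self.2 (mem_univ i)) j ?_
  rw [P.mem_part_iff_part_eq_part (mem_univ j) (mem_univ i), hij]

def JoinsEnds (P : Finpartition (univ : Finset (Fin (n + 1)))) : Prop :=
  P.part 0 = P.part (Fin.last n)

theorem joinsEnds_iff {P : Finpartition (univ : Finset (Fin (n + 1)))} :
    JoinsEnds P ↔ ∃ b ∈ P.parts, 0 ∈ b ∧ Fin.last n ∈ b := by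
  rw [JoinsEnds, ← P.mem_part_iff_part_eq_part (mem_univ _) (mem_univ _), mem_part_iff_exists]

def separatedPartitions (m r : ℕ) : Set (Finpartition (univ : Finset (Fin m))) :=
  {P | #P.parts = r ∧ IsSeparated P}

theorem stirlingB2dist_eq_ncard : stirlingB2dist m r = (separatedPartitions m r).ncard := by
  simp only [stirlingB2dist, separatedPartitions, isSeparated_iff]

theorem Dcount_succ_eq_ncard :
    Dcount (n + 1) r n.succ_pos = (separatedPartitions (n + 1) r ∩ {P | JoinsEnds P}).ncard := by
  simp only [Dcount, separatedPartitions, Set.inter_def, Set.mem_ofPred_eq, isSeparated_iff,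
    joinsEnds_iff, and_assoc]
  rfl

theorem card_parts_lt_of_joinsEnds (hn : n ≠ 0) {P : Finpartition (univ : Finset (Fin (n + 1)))}
    (hP : JoinsEnds P) : #P.parts < n + 1 := by
  rw [parts_eq_image_part]
  refine lt_of_le_of_ne ((card_image_le).trans_eq (card_fin _)) fun h => hn ?_
  have hinj := injOn_of_card_image_eq (h.trans (card_fin _).symm)
  simpa [Fin.ext_iff, eq_comm] using hinj (mem_coe.2 (mem_univ 0)) (mem_coe.2 (mem_univ _)) hP

theorem Dcount_self (hn : n ≠ 0) : Dcount (n + 1) (n + 1) n.succ_pos = 0 := by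
  rw [Dcount_succ_eq_ncard, Set.ncard_eq_zero]
  ext P
  simp only [Set.mem_inter_iff, Set.mem_ofPred_eq, separatedPartitions, Set.mem_empty_iff_false,
    iff_false, not_and]
  exact fun ⟨hcard, _⟩ hP => (card_parts_lt_of_joinsEnds hn hP).ne hcard

end Separated

section EraseLast

variable {n r : ℕ}

-- Pulling a partition back along `Fin.castSucc` deletes the last element; pulling it back along
-- `Fin.lastToZero` adds a new last element to the block of `0`.
def Fin.lastToZero : Fin (n + 2) → Fin (n + 1) :=
  Fin.lastCases 0 id

@[simp] theorem Fin.lastToZero_last : Fin.lastToZero (Fin.last (n + 1)) = 0 :=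
  Fin.lastCases_last

@[simp] theorem Fin.lastToZero_castSucc (i : Fin (n + 1)) : Fin.lastToZero i.castSucc = i :=
  Fin.lastCases_castSucc i

variable {P : Finpartition (univ : Finset (Fin (n + 2)))}
  {Q : Finpartition (univ : Finset (Fin (n + 1)))}

theorem IsSeparated.comap_castSucc (hP : IsSeparated P) : IsSeparated (P.comap Fin.castSucc) :=
  fun i j hij hne => by
    simpa using hP _ _ (part_comap_eq_part_comap.1 hij) (Fin.castSucc_injective _ |>.ne hne)

theorem not_joinsEnds_comap_castSucc (hP : IsSeparated P) (hJ : JoinsEnds P) :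
    ¬JoinsEnds (P.comap Fin.castSucc) := fun hJ' => by
  have h := part_comap_eq_part_comap.1 hJ'
  rw [Fin.castSucc_zero, hJ] at h
  have := hP _ _ h.symm (Fin.castSucc_lt_last _).ne
  simp [Nat.dist] at this

theorem card_parts_comap_castSucc (hJ : JoinsEnds P) :
    #(P.comap Fin.castSucc).parts = #P.parts := by
  refine card_parts_comap fun y => ?_
  induction y using Fin.lastCases with
  | last => exact ⟨0, hJ⟩
  | cast i => exact ⟨i, rfl⟩

theorem IsSeparated.comap_lastToZero (hQ : IsSeparated Q) (hJ : ¬JoinsEnds Q) :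
    IsSeparated (Q.comap Fin.lastToZero) := by
  have hfar (j : Fin (n + 1)) (hj : Q.part 0 = Q.part j) :
      2 ≤ Nat.dist (Fin.last (n + 1)) j.castSucc := by
    have : j ≠ Fin.last n := by rintro rfl; exact hJ hj
    have := Fin.val_lt_last this
    rw [Nat.dist, Fin.val_last, Fin.val_castSucc]
    omega
  intro i j hij hne
  rw [part_comap_eq_part_comap] at hij
  induction i using Fin.lastCases with
  | last =>
    induction j using Fin.lastCases with
    | last => exact absurd rfl hne
    | cast j => exact hfar j (by simpa using hij)
  | cast i =>
    induction j using Fin.lastCases with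
    | last => exact Nat.dist_comm _ _ ▸ hfar i (by simpa using hij.symm)
    | cast j => simpa using hQ i j (by simpa using hij) (by rintro rfl; exact hne rfl)

theorem joinsEnds_comap_lastToZero : JoinsEnds (Q.comap Fin.lastToZero) := by
  rw [JoinsEnds, part_comap_eq_part_comap, ← Fin.castSucc_zero, Fin.lastToZero_castSucc,
    Fin.lastToZero_last]

theorem card_parts_comap_lastToZero : #(Q.comap Fin.lastToZero).parts = #Q.parts :=
  card_parts_comap fun y => ⟨y.castSucc, by rw [Fin.lastToZero_castSucc]⟩

theorem comap_castSucc_comap_lastToZero :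
    (Q.comap Fin.lastToZero).comap Fin.castSucc = Q := by
  rw [comap_comap]
  exact comap_eq_self fun x => by rw [Function.comp_apply, Fin.lastToZero_castSucc]

theorem comap_lastToZero_comap_castSucc (hJ : JoinsEnds P) :
    (P.comap Fin.castSucc).comap Fin.lastToZero = P := by
  rw [comap_comap]
  refine comap_eq_self fun x => ?_
  induction x using Fin.lastCases with
  | last => rw [Function.comp_apply, Fin.lastToZero_last, Fin.castSucc_zero]; exact hJ
  | cast i => simp

theorem bijOn_comap_castSucc :
    Set.BijOn (comap Fin.castSucc) (separatedPartitions (n + 2) r ∩ {P | JoinsEnds P})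
      (separatedPartitions (n + 1) r \ {Q | JoinsEnds Q}) := by
  refine Set.InvOn.bijOn (f' := comap Fin.lastToZero) ⟨fun P ⟨_, hJ⟩ => ?_, fun Q _ => ?_⟩ ?_ ?_
  · exact comap_lastToZero_comap_castSucc hJ
  · exact comap_castSucc_comap_lastToZero
  · rintro P ⟨⟨hcard, hsep⟩, hJ⟩
    exact ⟨⟨(card_parts_comap_castSucc hJ).trans hcard, hsep.comap_castSucc⟩,
      not_joinsEnds_comap_castSucc hsep hJ⟩
  · rintro Q ⟨⟨hcard, hsep⟩, hJ⟩
    exact ⟨⟨card_parts_comap_lastToZero.trans hcard, hsep.comap_lastToZero hJ⟩,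
      joinsEnds_comap_lastToZero⟩

end EraseLast

theorem stirlingB2dist_succ_eq_Dcount_add_Dcount (n r : ℕ) :
    stirlingB2dist (n + 1) r = Dcount (n + 1) r n.succ_pos + Dcount (n + 2) r (n + 1).succ_pos := by
  rw [stirlingB2dist_eq_ncard, Dcount_succ_eq_ncard, Dcount_succ_eq_ncard,
    bijOn_comap_castSucc.ncard_eq, Set.ncard_inter_add_ncard_sdiff_eq_ncard]

theorem eq_alternating_sum_of_add_eq {a b : ℕ → ℤ} (hab : ∀ n, a n + a (n + 1) = b n) (m d : ℕ) :
    a (m + d) = (-1) ^ d * a m + ∑ j ∈ Icc 1 d, (-1) ^ (j + 1) * b (m + d - j) := by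
  induction d generalizing m with
  | zero => simp
  | succ d ih =>
    rw [← add_assoc, add_right_comm, ih, sum_Icc_succ_top (by omega), eq_sub_of_add_eq' (hab m),
      show m + 1 + d - (d + 1) = m by omega]
    ring

theorem Dcount_eq (k r : ℕ) (hr : 2 ≤ r) (hk : r ≤ k) :
    (Dcount k r (lt_of_lt_of_le (by omega) hk) : ℤ)
      = ∑ j ∈ Finset.Icc 1 (k - r), (-1 : ℤ) ^ (j + 1) * (stirlingB2dist (k - j) r : ℤ) := by
  obtain ⟨m, rfl⟩ : ∃ m, r = m + 1 := ⟨r - 1, by omega⟩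
  obtain ⟨d, rfl⟩ : ∃ d, k = m + d + 1 := ⟨k - m - 1, by omega⟩
  have h := eq_alternating_sum_of_add_eq (a := fun n => (Dcount (n + 1) (m + 1) n.succ_pos : ℤ))
    (b := fun n => (stirlingB2dist (n + 1) (m + 1) : ℤ))
    (fun n => by exact_mod_cast (stirlingB2dist_succ_eq_Dcount_add_Dcount n (m + 1)).symm) m d
  rw [Dcount_self (by omega)] at h
  rw [h, show m + d + 1 - (m + 1) = d by omega, Nat.cast_zero, mul_zero, zero_add]
  refine sum_congr rfl fun j hj => ?_
  rw [show m + d + 1 - j = m + d - j + 1 by grind]
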